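/- arXiv:2012.12145 — 2 statements merged into one kernel-verified Lean document; each statement's English description precedes it below -/
import Mathlib

section
/- Assume v ≠ v_o and d_CPA ≤ d_crit for some real d_crit ≥ 0. Then t₁ = t_CPA − √(d_crit² − d_CPA²)/‖v − v_o‖ and t₂ = t_CPA + √(d_crit² − d_CPA²)/‖v − v_o‖ both solve the critical-distance equation ‖(p + t·v) − (p_o + t·v_o)‖ = d_crit, and every real solution t of this equation equals t₁ or t₂. -/
/-!
The relative position is `t • w - y` with `w = v - vo` and `y = po - p`. At `t₀ = ⟪y, w⟫ / ‖w‖²`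
the vector `t₀ • w - y` is orthogonal to `w`, so Pythagoras gives
`‖t • w - y‖² = ‖w‖² (t - t₀)² + d_CPA²`, and the critical-distance equation becomes the quadratic
`‖w‖² (t - t₀)² = d_crit² - d_CPA²`, whose roots are `t₀ ± √(d_crit² - d_CPA²) / ‖w‖`.
-/

open RealInnerProductSpace

theorem mul_sq_sub_eq_iff {a c t₀ t : ℝ} (ha : a ≠ 0) (hc : 0 ≤ c) :
    a ^ 2 * (t - t₀) ^ 2 = c ↔ t = t₀ - √c / a ∨ t = t₀ + √c / a := by
  have hsq : a ^ 2 * (t - t₀) ^ 2 = c ↔ (a * (t - t₀)) ^ 2 = √c ^ 2 := by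
    rw [mul_pow, Real.sq_sqrt hc]
  rw [hsq, sq_eq_sq_iff_eq_or_eq_neg, or_comm, sub_eq_add_neg t₀, ← neg_div,
    ← sub_eq_iff_eq_add', ← sub_eq_iff_eq_add', eq_div_iff ha, eq_div_iff ha, mul_comm]

section InnerProductSpace

variable {E : Type*} [NormedAddCommGroup E] [InnerProductSpace ℝ E] {w : E}

theorem inner_smul_sub_eq_zero (hw : w ≠ 0) (y : E) :
    ⟪w, (⟪y, w⟫ / ‖w‖ ^ 2) • w - y⟫ = 0 := by
  have hw' : ‖w‖ ^ 2 ≠ 0 := by positivity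
  rw [inner_sub_right, real_inner_smul_right, real_inner_self_eq_norm_sq, real_inner_comm,
    div_mul_cancel₀ _ hw', sub_self]

theorem norm_smul_sub_sq (hw : w ≠ 0) (y : E) (t : ℝ) :
    ‖t • w - y‖ ^ 2 =
      ‖w‖ ^ 2 * (t - ⟪y, w⟫ / ‖w‖ ^ 2) ^ 2 + ‖(⟪y, w⟫ / ‖w‖ ^ 2) • w - y‖ ^ 2 := by
  set t₀ := ⟪y, w⟫ / ‖w‖ ^ 2
  have hsplit : t • w - y = (t - t₀) • w + (t₀ • w - y) := by rw [sub_smul]; abel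
  have horth : ⟪(t - t₀) • w, t₀ • w - y⟫ = 0 := by
    rw [real_inner_smul_left, inner_smul_sub_eq_zero hw, mul_zero]
  rw [hsplit, norm_add_sq_real, horth, mul_zero, add_zero, norm_smul, mul_pow,
    Real.norm_eq_abs, sq_abs, mul_comm ((t - t₀) ^ 2)]

theorem norm_smul_sub_eq_iff (hw : w ≠ 0) {y : E} {r : ℝ}
    (hle : ‖(⟪y, w⟫ / ‖w‖ ^ 2) • w - y‖ ≤ r) (t : ℝ) :
    ‖t • w - y‖ = r ↔
      t = ⟪y, w⟫ / ‖w‖ ^ 2 - √(r ^ 2 - ‖(⟪y, w⟫ / ‖w‖ ^ 2) • w - y‖ ^ 2) / ‖w‖ ∨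
      t = ⟪y, w⟫ / ‖w‖ ^ 2 + √(r ^ 2 - ‖(⟪y, w⟫ / ‖w‖ ^ 2) • w - y‖ ^ 2) / ‖w‖ := by
  have hr : 0 ≤ r := (norm_nonneg _).trans hle
  have hgap : 0 ≤ r ^ 2 - ‖(⟪y, w⟫ / ‖w‖ ^ 2) • w - y‖ ^ 2 :=
    sub_nonneg.mpr (pow_le_pow_left₀ (norm_nonneg _) hle 2)
  rw [← mul_sq_sub_eq_iff (norm_ne_zero_iff.mpr hw) hgap, eq_sub_iff_add_eq,
    ← norm_smul_sub_sq hw, sq_eq_sq₀ (norm_nonneg _) hr]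

end InnerProductSpace

theorem critical_distance_solutions_general
    (p v po vo : EuclideanSpace ℝ (Fin 2)) (hv : v ≠ vo)
    (d : ℝ → ℝ) (hd : ∀ t, d t = ‖(p + t • v) - (po + t • vo)‖)
    (tCPA : ℝ) (htCPA : tCPA = ⟪po - p, v - vo⟫ / ‖v - vo‖ ^ 2)
    (dCPA : ℝ) (hdCPA : dCPA = d tCPA)
    (dcrit : ℝ) (hle : dCPA ≤ dcrit)
    (t₁ t₂ : ℝ)
    (ht₁ : t₁ = tCPA - Real.sqrt (dcrit ^ 2 - dCPA ^ 2) / ‖v - vo‖)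
    (ht₂ : t₂ = tCPA + Real.sqrt (dcrit ^ 2 - dCPA ^ 2) / ‖v - vo‖) :
    ‖(p + t₁ • v) - (po + t₁ • vo)‖ = dcrit ∧
    ‖(p + t₂ • v) - (po + t₂ • vo)‖ = dcrit ∧
    ∀ t : ℝ, ‖(p + t • v) - (po + t • vo)‖ = dcrit → t = t₁ ∨ t = t₂ := by
  have hrel : ∀ t : ℝ, (p + t • v) - (po + t • vo) = t • (v - vo) - (po - p) := by
    intro t
    rw [smul_sub]
    abel
  have hdCPA' : dCPA = ‖tCPA • (v - vo) - (po - p)‖ := by rw [hdCPA, hd, hrel]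
  subst htCPA ht₁ ht₂ hdCPA'
  have hsol := norm_smul_sub_eq_iff (sub_ne_zero.mpr hv) hle
  simp only [hrel]
  exact ⟨(hsol _).2 (Or.inl rfl), (hsol _).2 (Or.inr rfl), fun t => (hsol t).1⟩

/-- If `v ≠ vo`, `0 ≤ d_crit` and `d_CPA ≤ d_crit`, then
`t₁ = t_CPA - √(d_crit² - d_CPA²)/‖v - vo‖` and
`t₂ = t_CPA + √(d_crit² - d_CPA²)/‖v - vo‖` both solve
`‖(p + t • v) - (po + t • vo)‖ = d_crit`, and every real solution equals `t₁` or `t₂`. -/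
theorem critical_distance_solutions
    (p v po vo : EuclideanSpace ℝ (Fin 2)) (hv : v ≠ vo)
    (d : ℝ → ℝ) (hd : ∀ t, d t = ‖(p + t • v) - (po + t • vo)‖)
    (tCPA : ℝ) (htCPA : tCPA = ⟪po - p, v - vo⟫ / ‖v - vo‖ ^ 2)
    (dCPA : ℝ) (hdCPA : dCPA = d tCPA)
    (dcrit : ℝ) (hdcrit_nonneg : 0 ≤ dcrit) (hle : dCPA ≤ dcrit)
    (t₁ t₂ : ℝ)
    (ht₁ : t₁ = tCPA - Real.sqrt (dcrit ^ 2 - dCPA ^ 2) / ‖v - vo‖)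
    (ht₂ : t₂ = tCPA + Real.sqrt (dcrit ^ 2 - dCPA ^ 2) / ‖v - vo‖) :
    ‖(p + t₁ • v) - (po + t₁ • vo)‖ = dcrit ∧
    ‖(p + t₂ • v) - (po + t₂ • vo)‖ = dcrit ∧
    ∀ t : ℝ, ‖(p + t • v) - (po + t • vo)‖ = dcrit → t = t₁ ∨ t = t₂ :=
  critical_distance_solutions_general p v po vo hv d hd tCPA htCPA dCPA hdCPA dcrit hle t₁ t₂ ht₁
    ht₂
end

section
/- Let V_b ⊆ ℝ² be a finite set of body vertices, let c_rot(q) = R(ψ) q + (x, y) be a rigid motion, and let S_env = {p ∈ ℝ² : a_l · p ≤ b_l, l = 1, …, K} be a convex polytope with unit-norm normals ‖a_l‖ = 1. Suppose 0 ≤ ε ≤ d_safe and that the margined constraints a_l · c_rot(p_l) ≤ b_l − (d_safe − ε) hold for every vertex p_l ∈ V_b and every l. Then every point of ℝ² whose distance to the transformed body (the image under c_rot of the convex hull of V_b) is at most d_safe − ε lies in S_env. -/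
/-!
The rigid motion is affine, so it maps the convex hull of the vertices onto the convex hull of
their images; the margined half-spaces are convex, hence contain that hull. Moving a distance at
most `d_safe - ε` changes `⟪a_l, ·⟫` by at most `d_safe - ε` when `‖a_l‖ = 1` (Cauchy–Schwarz),
which is exactly the margin.
-/

open RealInnerProductSpace

section HalfSpace

variable {E : Type*} [NormedAddCommGroup E] [InnerProductSpace ℝ E]

theorem inner_le_of_mem_convexHull {s : Set E} {a p : E} {c : ℝ} (hs : ∀ v ∈ s, ⟪a, v⟫ ≤ c)
    (hp : p ∈ convexHull ℝ s) : ⟪a, p⟫ ≤ c :=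
  convexHull_min hs (convex_halfSpace_le (innerₗ E a).isLinear c) hp

theorem inner_le_of_dist_le {a w z : E} {c r : ℝ} (ha : ‖a‖ ≤ 1) (hw : ⟪a, w⟫ ≤ c - r)
    (hzw : dist z w ≤ r) : ⟪a, z⟫ ≤ c := by
  have hshift : ⟪a, z - w⟫ ≤ dist z w :=
    calc ⟪a, z - w⟫ ≤ ‖a‖ * ‖z - w‖ := real_inner_le_norm _ _
      _ ≤ ‖z - w‖ := mul_le_of_le_one_left (norm_nonneg _) ha
      _ = dist z w := (dist_eq_norm z w).symm
  rw [inner_sub_right] at hshift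
  linarith

end HalfSpace

noncomputable def planarRigidMotion (ψ x y : ℝ) :
    EuclideanSpace ℝ (Fin 2) →ᵃ[ℝ] EuclideanSpace ℝ (Fin 2) :=
  (Matrix.toEuclideanLin !![Real.cos ψ, -Real.sin ψ; Real.sin ψ, Real.cos ψ]).toAffineMap
    + AffineMap.const ℝ _ !₂[x, y]

theorem planarRigidMotion_apply (ψ x y : ℝ) (q : EuclideanSpace ℝ (Fin 2)) :
    planarRigidMotion ψ x y q = (WithLp.equiv 2 (Fin 2 → ℝ)).symm
      ![Real.cos ψ * q 0 - Real.sin ψ * q 1 + x,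
        Real.sin ψ * q 0 + Real.cos ψ * q 1 + y] := by
  ext i
  fin_cases i <;> simp [planarRigidMotion, dotProduct, Fin.sum_univ_two, sub_eq_add_neg, add_comm]

theorem margined_constraints_safety_margin_general
    (Vb : Finset (EuclideanSpace ℝ (Fin 2))) (ψ x y : ℝ)
    (crot : EuclideanSpace ℝ (Fin 2) → EuclideanSpace ℝ (Fin 2))
    (hcrot : ∀ q, crot q = (WithLp.equiv 2 (Fin 2 → ℝ)).symm
      ![Real.cos ψ * q 0 - Real.sin ψ * q 1 + x,
        Real.sin ψ * q 0 + Real.cos ψ * q 1 + y])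
    (K : ℕ) (a : Fin K → EuclideanSpace ℝ (Fin 2)) (b : Fin K → ℝ)
    (ha : ∀ l : Fin K, ‖a l‖ = 1)
    (Senv : Set (EuclideanSpace ℝ (Fin 2)))
    (hSenv : Senv = {p : EuclideanSpace ℝ (Fin 2) | ∀ l : Fin K, ⟪a l, p⟫ ≤ b l})
    (dsafe ε : ℝ)
    (hV : ∀ pl ∈ Vb, ∀ l : Fin K, ⟪a l, crot pl⟫ ≤ b l - (dsafe - ε)) :
    ∀ z : EuclideanSpace ℝ (Fin 2),
      (∃ w ∈ crot '' (convexHull ℝ (Vb : Set (EuclideanSpace ℝ (Fin 2)))),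
        dist z w ≤ dsafe - ε) → z ∈ Senv := by
  rintro z ⟨w, hw, hzw⟩
  have hcrot_affine : crot = planarRigidMotion ψ x y :=
    funext fun q => (hcrot q).trans (planarRigidMotion_apply ψ x y q).symm
  rw [hcrot_affine, AffineMap.image_convexHull] at hw
  subst hSenv
  intro l
  have hw_margin : ⟪a l, w⟫ ≤ b l - (dsafe - ε) := by
    refine inner_le_of_mem_convexHull ?_ hw
    rintro _ ⟨pl, hpl, rfl⟩
    exact hcrot_affine ▸ hV pl hpl l
  exact inner_le_of_dist_le (ha l).le hw_margin hzw

/-- Let `Vb` be a finite set of body vertices, `crot` the rigid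
motion at pose `(x, y, ψ)`, and `Senv` a convex polytope with unit-norm normals.
If `0 ≤ ε ≤ d_safe` and the margined constraints
`⟪a l, crot pl⟫ ≤ b l - (d_safe - ε)` hold for every vertex `pl ∈ Vb` and every `l`,
then every point of the plane whose distance to the transformed body
(the image under `crot` of the convex hull of `Vb`) is at most `d_safe - ε`
lies in `Senv`. -/
theorem margined_constraints_safety_margin
    (Vb : Finset (EuclideanSpace ℝ (Fin 2))) (ψ x y : ℝ)
    (crot : EuclideanSpace ℝ (Fin 2) → EuclideanSpace ℝ (Fin 2))
    (hcrot : ∀ q, crot q = (WithLp.equiv 2 (Fin 2 → ℝ)).symm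
      ![Real.cos ψ * q 0 - Real.sin ψ * q 1 + x,
        Real.sin ψ * q 0 + Real.cos ψ * q 1 + y])
    (K : ℕ) (a : Fin K → EuclideanSpace ℝ (Fin 2)) (b : Fin K → ℝ)
    (ha : ∀ l : Fin K, ‖a l‖ = 1)
    (Senv : Set (EuclideanSpace ℝ (Fin 2)))
    (hSenv : Senv = {p : EuclideanSpace ℝ (Fin 2) | ∀ l : Fin K, ⟪a l, p⟫ ≤ b l})
    (dsafe ε : ℝ) (hε : 0 ≤ ε) (hεd : ε ≤ dsafe)
    (hV : ∀ pl ∈ Vb, ∀ l : Fin K, ⟪a l, crot pl⟫ ≤ b l - (dsafe - ε)) :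
    ∀ z : EuclideanSpace ℝ (Fin 2),
      (∃ w ∈ crot '' (convexHull ℝ (Vb : Set (EuclideanSpace ℝ (Fin 2)))),
        dist z w ≤ dsafe - ε) → z ∈ Senv :=
  margined_constraints_safety_margin_general Vb ψ x y crot hcrot K a b ha Senv hSenv dsafe ε hV
end
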